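/- arXiv:quant-ph/0209091 — 2 statements merged into one kernel-verified Lean document; each statement's English description precedes it below -/
import Mathlib

section
/- Let p be prime and let C ⊆ C_max ⊆ C^⊥ be linear subspaces of Z_p^{2n} with C_max = C_max^⊥ (orthogonality with respect to the symplectic inner product). Let e ∈ C_max \ C, and let R ⊆ C^⊥ be a complete set of representatives of the cosets of C_max in C^⊥ (one element from each coset). Then Σ_{x ∈ R} ω^{⟨e,x⟩} = 0, where ω = exp(2πi/p) and the exponent is the canonical integer representative of ⟨e,x⟩ ∈ Z_p. -/
/-!
Since `C` is its own double orthogonal for the nondegenerate symplectic form and `e ∉ C`, some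
`x₀ ∈ C^⊥` has `⟨e, x₀⟩ ≠ 0`. Translating by `x₀` and reducing modulo `Cmax` permutes `R`, while
`⟨e, ·⟩` is constant on `Cmax`-cosets because `e ∈ Cmax = Cmax^⊥`. Hence the sum `S` satisfies
`S = ω^{⟨e, x₀⟩} S` with `ω^{⟨e, x₀⟩} ≠ 1`, so `S = 0`.
-/

open scoped BigOperators
open Matrix

/-- `omg p` is the complex primitive `p`-th root of unity `exp(2πi/p)`. -/
noncomputable def omg (p : ℕ) : ℂ := Complex.exp (2 * Real.pi * Complex.I / p)

/-- The generalized Pauli matrix `XZ(u) = X^{a_1}Z^{b_1} ⊗ ⋯ ⊗ X^{a_n}Z^{b_n}`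
for `u = ((a_1,b_1),…,(a_n,b_n)) ∈ (Z_p²)ⁿ`, written out entrywise with respect to the
computational basis of `(ℂ^p)^{⊗n} ≃ ℂ^{p^n}`, whose coordinates are indexed by
`Fin n → ZMod p`.  (It is the matrix determined by
`XZ(u) |i₁ … iₙ⟩ = ∏_t ω^{b_t i_t} |i₁+a₁, …, iₙ+aₙ⟩`.) -/
noncomputable def XZ (p n : ℕ) (u : Fin n → ZMod p × ZMod p) :
    Matrix (Fin n → ZMod p) (Fin n → ZMod p) ℂ :=
  fun j i => ∏ t : Fin n, if j t = i t + (u t).1 then omg p ^ ((u t).2 * i t).val else 0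

/-- The symplectic inner product `⟨u,v⟩ = Σ b_i c_i − a_i d_i` on `Z_p^{2n}`. -/
def symp (p n : ℕ) (u v : Fin n → ZMod p × ZMod p) : ZMod p :=
  ∑ t : Fin n, ((u t).2 * (v t).1 - (u t).1 * (v t).2)

/-- The standard Hermitian inner product on `I → ℂ`. -/
noncomputable def cinner {I : Type*} [Fintype I] (x y : I → ℂ) : ℂ :=
  ∑ i, (starRingEnd ℂ) (x i) * y i

open LinearMap (BilinForm)

/-- `x ↦ (representative of x + a)` is a permutation of `R`. -/
theorem Finset.sum_add_eq_sum_of_existsUnique_sub_mem {G M : Type*} [AddCommGroup G]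
    [AddCommMonoid M] {U W : AddSubgroup G} {R : Finset G} (hRU : ∀ x ∈ R, x ∈ U)
    (hR : ∀ v ∈ U, ∃! x, x ∈ R ∧ v - x ∈ W) {f : G → M} (hf : ∀ v w, v - w ∈ W → f v = f w)
    {a : G} (ha : a ∈ U) :
    ∑ x ∈ R, f (x + a) = ∑ x ∈ R, f x := by
  choose! rep hrep hrep_unique using hR
  have rep_eq {v y : G} (hv : v ∈ U) (hy : y ∈ R) (hvy : v - y ∈ W) : rep v = y :=
    (hrep_unique v hv y ⟨hy, hvy⟩).symm
  have hadd {x : G} (hx : x ∈ R) : x + a ∈ U := add_mem (hRU x hx) ha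
  have hsub {x : G} (hx : x ∈ R) : x - a ∈ U := sub_mem (hRU x hx) ha
  refine Finset.sum_nbij' (fun x => rep (x + a)) (fun x => rep (x - a))
    (fun x hx => (hrep _ (hadd hx)).1) (fun x hx => (hrep _ (hsub hx)).1) ?_ ?_ ?_
  · intro x hx
    refine rep_eq (hsub (hrep _ (hadd hx)).1) hx ?_
    convert W.neg_mem (hrep _ (hadd hx)).2 using 1
    abel
  · intro x hx
    refine rep_eq (hadd (hrep _ (hsub hx)).1) hx ?_
    convert W.neg_mem (hrep _ (hsub hx)).2 using 1
    abel
  · exact fun x hx => hf _ _ (hrep _ (hadd hx)).2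

noncomputable def sympForm (p n : ℕ) : BilinForm (ZMod p) (Fin n → ZMod p × ZMod p) :=
  LinearMap.mk₂ (ZMod p) (symp p n)
    (fun _ _ _ => by
      simp only [symp, ← Finset.sum_add_distrib]
      congr! 1
      simp only [Pi.add_apply, Prod.fst_add, Prod.snd_add]
      ring)
    (fun _ _ _ => by
      simp only [symp, smul_eq_mul, Finset.mul_sum]
      congr! 1
      simp only [Pi.smul_apply, Prod.smul_fst, Prod.smul_snd, smul_eq_mul]
      ring)
    (fun _ _ _ => by
      simp only [symp, ← Finset.sum_add_distrib]
      congr! 1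
      simp only [Pi.add_apply, Prod.fst_add, Prod.snd_add]
      ring)
    (fun _ _ _ => by
      simp only [symp, smul_eq_mul, Finset.mul_sum]
      congr! 1
      simp only [Pi.smul_apply, Prod.smul_fst, Prod.smul_snd, smul_eq_mul]
      ring)

@[simp]
theorem sympForm_apply (p n : ℕ) (u v : Fin n → ZMod p × ZMod p) :
    sympForm p n u v = symp p n u v := rfl

theorem sympForm_isAlt (p n : ℕ) : (sympForm p n).IsAlt := fun u => by
  simp [symp, mul_comm]

theorem symp_single (p n : ℕ) (u : Fin n → ZMod p × ZMod p) (t : Fin n) (c d : ZMod p) :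
    symp p n u (Pi.single t (c, d)) = (u t).2 * c - (u t).1 * d := by
  simp [symp, Pi.single_apply, apply_ite Prod.fst, apply_ite Prod.snd]

theorem sympForm_nondegenerate (p n : ℕ) : (sympForm p n).Nondegenerate := by
  refine ((sympForm_isAlt p n).isRefl.nondegenerate_iff_separatingLeft).2 fun u hu => ?_
  funext t
  have h1 : (u t).2 = 0 := by simpa [symp_single] using hu (Pi.single t (1, 0))
  have h2 : (u t).1 = 0 := by simpa [symp_single] using hu (Pi.single t (0, 1))
  exact Prod.ext h2 h1

theorem exists_mem_orthogonal_symp_ne_zero {p n : ℕ} [Fact p.Prime]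
    {C : Submodule (ZMod p) (Fin n → ZMod p × ZMod p)} {e : Fin n → ZMod p × ZMod p}
    (he : e ∉ C) : ∃ x ∈ (sympForm p n).orthogonal C, symp p n e x ≠ 0 := by
  have hB := sympForm_isAlt p n
  rw [← BilinForm.orthogonal_orthogonal (sympForm_nondegenerate p n) hB.isRefl C,
    BilinForm.mem_orthogonal_iff] at he
  push Not at he
  obtain ⟨x, hx, hxe⟩ := he
  refine ⟨x, hx, fun h => hxe ?_⟩
  rw [← hB.neg_eq, sympForm_apply, h, neg_zero]

theorem character_sum_zero_general (p n : ℕ) [Fact p.Prime]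
    (C Cmax : Submodule (ZMod p) (Fin n → ZMod p × ZMod p))
    (hmax : ∀ u, u ∈ Cmax ↔ ∀ c ∈ Cmax, symp p n c u = 0)
    (e : Fin n → ZMod p × ZMod p) (heMax : e ∈ Cmax) (heC : e ∉ C)
    (R : Finset (Fin n → ZMod p × ZMod p))
    (hRsub : ∀ x ∈ R, ∀ c ∈ C, symp p n c x = 0)
    (hRrep : ∀ v : Fin n → ZMod p × ZMod p, (∀ c ∈ C, symp p n c v = 0) →
      ∃! x, x ∈ R ∧ v - x ∈ Cmax) :
    ∑ x ∈ R, omg p ^ (symp p n e x).val = 0 := by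
  have hω : IsPrimitiveRoot (omg p) p := Complex.isPrimitiveRoot_exp p (NeZero.ne p)
  let ψ := AddChar.zmodChar p hω.pow_eq_one
  obtain ⟨x₀, hx₀, he₀⟩ := exists_mem_orthogonal_symp_ne_zero heC
  have hψ : ψ (symp p n e x₀) ≠ 1 :=
    hω.pow_ne_one_of_pos_of_lt ((ZMod.val_ne_zero _).2 he₀) (ZMod.val_lt _)
  have hconst (v w) (hvw : v - w ∈ Cmax) : ψ (symp p n e v) = ψ (symp p n e w) := by
    have h0 : symp p n e (v - w) = 0 := (hmax _).1 hvw e heMax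
    rw [← sympForm_apply, map_sub, sub_eq_zero, sympForm_apply, sympForm_apply] at h0
    rw [h0]
  have hshift := Finset.sum_add_eq_sum_of_existsUnique_sub_mem
    (U := ((sympForm p n).orthogonal C).toAddSubgroup) (W := Cmax.toAddSubgroup)
    hRsub hRrep hconst hx₀
  simp only [← sympForm_apply, map_add, AddChar.map_add_eq_mul,
    ← Finset.sum_mul] at hshift
  by_contra hS
  exact hψ ((mul_eq_left₀ hS).1 hshift)

/-- For `e ∈ C_max \ C` and a complete set `R` of representatives of the cosets of
`C_max` in `C^⊥`, the character sum `Σ_{x ∈ R} ω^{⟨e,x⟩}` vanishes. -/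
theorem character_sum_zero (p n : ℕ) [Fact p.Prime]
    (C Cmax : Submodule (ZMod p) (Fin n → ZMod p × ZMod p))
    (hCsub : C ≤ Cmax)
    (hsub : ∀ u ∈ Cmax, ∀ c ∈ C, symp p n c u = 0)
    (hmax : ∀ u, u ∈ Cmax ↔ ∀ c ∈ Cmax, symp p n c u = 0)
    (e : Fin n → ZMod p × ZMod p) (heMax : e ∈ Cmax) (heC : e ∉ C)
    (R : Finset (Fin n → ZMod p × ZMod p))
    (hRsub : ∀ x ∈ R, ∀ c ∈ C, symp p n c x = 0)
    (hRrep : ∀ v : Fin n → ZMod p × ZMod p, (∀ c ∈ C, symp p n c v = 0) →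
      ∃! x, x ∈ R ∧ v - x ∈ Cmax) :
    ∑ x ∈ R, omg p ^ (symp p n e x).val = 0 :=
  character_sum_zero_general p n C Cmax hmax e heMax heC R hRsub hRrep
end

section
/- In the badcodeword construction: for every e ∈ C^⊥, |⟨ψ1, XZ(e)ψ2⟩| = p^{−k/2}. -/
open scoped BigOperators
open Matrix

/-!
Up to a phase, `XZ(e) XZ(x) = XZ(e + x)`, so `⟨ψ1, XZ(e) ψ2⟩` is `p^{-k/2}` times a sum of phases
times `⟨ψ1, XZ(e + x) ψ1⟩`, `x ∈ R`. If `w ∉ C_max`, maximality gives `c ∈ C_max` with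
`⟨c, w⟩ ≠ 0`; the Weyl relation `XZ(c) XZ(w) = ω^{⟨c,w⟩} XZ(w) XZ(c)` and `XZ(c) ψ1 = λ ψ1`
with `|λ| = 1` then force `⟨ψ1, XZ(w) ψ1⟩ = 0`. Exactly one `x ∈ R`, the representative of the
coset of `-e`, has `e + x ∈ C_max`, and its term has modulus `|λ| = 1`.
-/

open scoped ComplexConjugate

lemma AddChar.map_sum_eq_prod {ι A M : Type*} [AddCommMonoid A] [CommMonoid M]
    (ψ : AddChar A M) (s : Finset ι) (f : ι → A) :
    ψ (∑ i ∈ s, f i) = ∏ i ∈ s, ψ (f i) :=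
  map_prod ψ.toMonoidHom (fun i => Multiplicative.ofAdd (f i)) s

lemma cinner_smul_left {I : Type*} [Fintype I] (a : ℂ) (x y : I → ℂ) :
    cinner (a • x) y = conj a * cinner x y := by
  simp only [cinner, Pi.smul_apply, smul_eq_mul, map_mul, Finset.mul_sum, mul_assoc]

lemma cinner_smul_right {I : Type*} [Fintype I] (a : ℂ) (x y : I → ℂ) :
    cinner x (a • y) = a * cinner x y := by
  simp only [cinner, Pi.smul_apply, smul_eq_mul, Finset.mul_sum, mul_left_comm]

lemma cinner_sum_right {I ι : Type*} [Fintype I] (s : Finset ι) (x : I → ℂ) (f : ι → I → ℂ) :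
    cinner x (∑ i ∈ s, f i) = ∑ i ∈ s, cinner x (f i) := by
  simp only [cinner, Finset.sum_apply, Finset.mul_sum]
  exact Finset.sum_comm

lemma symp_neg_right {p n : ℕ} (u v : Fin n → ZMod p × ZMod p) :
    symp p n u (-v) = -symp p n u v := by
  simp only [symp, Pi.neg_apply, Prod.fst_neg, Prod.snd_neg, ← Finset.sum_neg_distrib]
  exact Finset.sum_congr rfl fun t _ => by ring

section Pauli

variable {p n : ℕ} [NeZero p]

local notation "𝕖" => ZMod.stdAddChar

lemma omg_pow_val (a : ZMod p) : omg p ^ a.val = 𝕖 a := by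
  rw [ZMod.stdAddChar_apply, ZMod.toCircle_apply, omg, ← Complex.exp_nat_mul]
  congr 1
  ring

lemma norm_stdAddChar (a : ZMod p) : ‖𝕖 a‖ = 1 := Circle.norm_coe _

lemma stdAddChar_ne_one {a : ZMod p} (ha : a ≠ 0) : 𝕖 a ≠ 1 := by
  rwa [← (𝕖 : AddChar (ZMod p) ℂ).map_zero_eq_one, ZMod.injective_stdAddChar.ne_iff]

lemma XZ_mulVec_apply (u : Fin n → ZMod p × ZMod p) (x : (Fin n → ZMod p) → ℂ)
    (j : Fin n → ZMod p) :
    (XZ p n u *ᵥ x) j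
      = 𝕖 (∑ t, (u t).2 * (j t - (u t).1)) * x (fun t => j t - (u t).1) := by
  rw [mulVec, dotProduct, Finset.sum_eq_single (fun t => j t - (u t).1)]
  · simp only [XZ, sub_add_cancel, if_true, omg_pow_val, AddChar.map_sum_eq_prod]
  · intro i _ hi
    obtain ⟨t, ht⟩ : ∃ t, j t ≠ i t + (u t).1 :=
      not_forall.1 fun h => hi (funext fun t => by rw [h t, add_sub_cancel_right])
    rw [XZ, Finset.prod_eq_zero (Finset.mem_univ t) (if_neg ht), zero_mul]
  · exact fun h => absurd (Finset.mem_univ _) h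

lemma XZ_mulVec_XZ_mulVec (u v : Fin n → ZMod p × ZMod p) (x : (Fin n → ZMod p) → ℂ) :
    XZ p n u *ᵥ (XZ p n v *ᵥ x) = 𝕖 (∑ t, (u t).2 * (v t).1) • XZ p n (u + v) *ᵥ x := by
  ext j
  simp only [Pi.smul_apply, smul_eq_mul, XZ_mulVec_apply, Pi.add_apply, Prod.fst_add,
    Prod.snd_add, sub_sub, ← mul_assoc, ← AddChar.map_add_eq_mul, ← Finset.sum_add_distrib]
  congr 3
  ext t
  ring

lemma XZ_mulVec_XZ_mulVec_comm (u v : Fin n → ZMod p × ZMod p) (x : (Fin n → ZMod p) → ℂ) :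
    XZ p n u *ᵥ (XZ p n v *ᵥ x) = 𝕖 (symp p n u v) • XZ p n v *ᵥ (XZ p n u *ᵥ x) := by
  rw [XZ_mulVec_XZ_mulVec, XZ_mulVec_XZ_mulVec, smul_smul, ← AddChar.map_add_eq_mul, add_comm v,
    symp, ← Finset.sum_add_distrib]
  congr 2
  exact Finset.sum_congr rfl fun t _ => by ring

lemma cinner_XZ_mulVec_XZ_mulVec (u : Fin n → ZMod p × ZMod p) (x y : (Fin n → ZMod p) → ℂ) :
    cinner (XZ p n u *ᵥ x) (XZ p n u *ᵥ y) = cinner x y := by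
  have hphase (a : ZMod p) : conj (𝕖 a) * 𝕖 a = 1 := by
    rw [Complex.conj_mul', norm_stdAddChar, Complex.ofReal_one, one_pow]
  simp only [cinner, XZ_mulVec_apply, map_mul]
  refine Fintype.sum_equiv (Equiv.subRight fun t => (u t).1) _ _ fun j => ?_
  rw [mul_mul_mul_comm, hphase, one_mul]
  rfl

lemma norm_eq_one_of_XZ_mulVec_eq_smul {c : Fin n → ZMod p × ZMod p} {ψ : (Fin n → ZMod p) → ℂ}
    {lam : ℂ} (hψ : cinner ψ ψ ≠ 0) (hlam : XZ p n c *ᵥ ψ = lam • ψ) : ‖lam‖ = 1 := by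
  have h := cinner_XZ_mulVec_XZ_mulVec c ψ ψ
  rw [hlam, cinner_smul_left, cinner_smul_right, ← mul_assoc, Complex.conj_mul'] at h
  have hsq : (‖lam‖ : ℂ) ^ 2 = 1 := mul_right_cancel₀ hψ (h.trans (one_mul _).symm)
  exact (pow_eq_one_iff_of_nonneg (norm_nonneg _) two_ne_zero).1 (by exact_mod_cast hsq)

lemma cinner_XZ_mulVec_eq_zero_of_symp_ne_zero {c w : Fin n → ZMod p × ZMod p}
    {ψ : (Fin n → ZMod p) → ℂ} {lam : ℂ} (hψ : cinner ψ ψ ≠ 0) (hlam : XZ p n c *ᵥ ψ = lam • ψ)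
    (hcw : symp p n c w ≠ 0) :
    cinner ψ (XZ p n w *ᵥ ψ) = 0 := by
  have hlam_unit : conj lam * lam = 1 := by
    rw [Complex.conj_mul', norm_eq_one_of_XZ_mulVec_eq_smul hψ hlam, Complex.ofReal_one, one_pow]
  have hT : cinner ψ (XZ p n w *ᵥ ψ) = 𝕖 (symp p n c w) * cinner ψ (XZ p n w *ᵥ ψ) := by
    have h := cinner_XZ_mulVec_XZ_mulVec c ψ (XZ p n w *ᵥ ψ)
    rw [XZ_mulVec_XZ_mulVec_comm, hlam, mulVec_smul, cinner_smul_left, cinner_smul_right,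
      cinner_smul_right] at h
    linear_combination -h + (𝕖 (symp p n c w) * cinner ψ (XZ p n w *ᵥ ψ)) * hlam_unit
  exact (mul_left_eq_self₀.1 hT.symm).resolve_left (stdAddChar_ne_one hcw)

lemma cinner_XZ_mulVec_eq_zero_of_notMem {S : Set (Fin n → ZMod p × ZMod p)}
    {ψ : (Fin n → ZMod p) → ℂ} (hS : ∀ w, (∀ c ∈ S, symp p n c w = 0) → w ∈ S)
    (hψ : cinner ψ ψ ≠ 0) (heig : ∀ c ∈ S, ∃ lam : ℂ, XZ p n c *ᵥ ψ = lam • ψ)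
    {w : Fin n → ZMod p × ZMod p} (hw : w ∉ S) :
    cinner ψ (XZ p n w *ᵥ ψ) = 0 := by
  obtain ⟨c, hc, hcw⟩ : ∃ c ∈ S, symp p n c w ≠ 0 := by
    by_contra! h
    exact hw (hS w h)
  obtain ⟨lam, hlam⟩ := heig c hc
  exact cinner_XZ_mulVec_eq_zero_of_symp_ne_zero hψ hlam hcw

end Pauli

theorem badcodeword_cross_term_general (p n k : ℕ) [Fact p.Prime]
    (C Cmax : Submodule (ZMod p) (Fin n → ZMod p × ZMod p))
    (hmax : ∀ u, u ∈ Cmax ↔ ∀ c ∈ Cmax, symp p n c u = 0)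
    (ψ1 : (Fin n → ZMod p) → ℂ) (hψ1 : cinner ψ1 ψ1 = 1)
    (heig : ∀ c ∈ Cmax, ∃ lam : ℂ, XZ p n c *ᵥ ψ1 = lam • ψ1)
    (R : Finset (Fin n → ZMod p × ZMod p))
    (hRrep : ∀ v : Fin n → ZMod p × ZMod p, (∀ c ∈ C, symp p n c v = 0) →
      ∃! x, x ∈ R ∧ v - x ∈ Cmax)
    (ψ2 : (Fin n → ZMod p) → ℂ)
    (hψ2 : ψ2 = ((Real.sqrt (p ^ k) : ℝ) : ℂ)⁻¹ • ∑ x ∈ R, XZ p n x *ᵥ ψ1)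
    (e : Fin n → ZMod p × ZMod p) (he : ∀ c ∈ C, symp p n c e = 0) :
    ‖cinner ψ1 (XZ p n e *ᵥ ψ2)‖ = (Real.sqrt (p ^ k))⁻¹ := by
  have hψ1₀ : cinner ψ1 ψ1 ≠ 0 := hψ1 ▸ one_ne_zero
  obtain ⟨x₀, ⟨hx₀R, hx₀⟩, hx₀_unique⟩ :=
    hRrep (-e) fun c hc => by rw [symp_neg_right, he c hc, neg_zero]
  have hmem (x : Fin n → ZMod p × ZMod p) : e + x ∈ Cmax ↔ -e - x ∈ Cmax := by
    rw [← Cmax.neg_mem_iff, neg_add']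
  have hvanish : ∀ x ∈ R, x ≠ x₀ → cinner ψ1 (XZ p n e *ᵥ (XZ p n x *ᵥ ψ1)) = 0 := by
    intro x hx hne
    rw [XZ_mulVec_XZ_mulVec, cinner_smul_right,
      cinner_XZ_mulVec_eq_zero_of_notMem (fun w => (hmax w).2) hψ1₀ heig, mul_zero]
    exact fun h => hne (hx₀_unique x ⟨hx, (hmem x).1 h⟩)
  obtain ⟨lam, hlam⟩ := heig _ ((hmem x₀).2 hx₀)
  rw [hψ2, mulVec_smul, cinner_smul_right, mulVec_sum, cinner_sum_right,
    Finset.sum_eq_single_of_mem x₀ hx₀R hvanish, XZ_mulVec_XZ_mulVec, hlam, cinner_smul_right,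
    cinner_smul_right, hψ1, mul_one, norm_mul, norm_mul, norm_stdAddChar,
    norm_eq_one_of_XZ_mulVec_eq_smul hψ1₀ hlam, norm_inv, Complex.norm_real,
    Real.norm_of_nonneg (Real.sqrt_nonneg _), mul_one, mul_one]

/-- In the badcodeword construction: for every `e ∈ C^⊥`,
`|⟨ψ1, XZ(e)ψ2⟩| = p^{−k/2}`. -/
theorem badcodeword_cross_term (p n k : ℕ) [Fact p.Prime]
    (C Cmax : Submodule (ZMod p) (Fin n → ZMod p × ZMod p))
    (hkn : k ≤ n)
    (hdimC : Module.finrank (ZMod p) C = n - k)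
    (hCself : ∀ u ∈ C, ∀ c ∈ C, symp p n c u = 0)
    (hCsub : C ≤ Cmax)
    (hsub : ∀ u ∈ Cmax, ∀ c ∈ C, symp p n c u = 0)
    (hmax : ∀ u, u ∈ Cmax ↔ ∀ c ∈ Cmax, symp p n c u = 0)
    (ψ1 : (Fin n → ZMod p) → ℂ) (hψ1 : cinner ψ1 ψ1 = 1)
    (heig : ∀ c ∈ Cmax, ∃ lam : ℂ, XZ p n c *ᵥ ψ1 = lam • ψ1)
    (R : Finset (Fin n → ZMod p × ZMod p)) (h0R : 0 ∈ R)
    (hRsub : ∀ x ∈ R, ∀ c ∈ C, symp p n c x = 0)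
    (hRrep : ∀ v : Fin n → ZMod p × ZMod p, (∀ c ∈ C, symp p n c v = 0) →
      ∃! x, x ∈ R ∧ v - x ∈ Cmax)
    (ψ2 : (Fin n → ZMod p) → ℂ)
    (hψ2 : ψ2 = ((Real.sqrt (p ^ k) : ℝ) : ℂ)⁻¹ • ∑ x ∈ R, XZ p n x *ᵥ ψ1)
    (e : Fin n → ZMod p × ZMod p) (he : ∀ c ∈ C, symp p n c e = 0) :
    ‖cinner ψ1 (XZ p n e *ᵥ ψ2)‖ = (Real.sqrt (p ^ k))⁻¹ :=
  badcodeword_cross_term_general p n k C Cmax hmax ψ1 hψ1 heig R hRrep ψ2 hψ2 e he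
end
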